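/- Let A be a compact metric space with dim A ≤ m. Then the set of continuous maps f : A → ℝ^m that are 0-dimensional (every fiber f⁻¹(x) is of covering dimension ≤ 0) is a dense G_δ subset of the space C(A, ℝ^m) of all continuous maps with the uniform convergence topology. -/

import Mathlib

open Set

/-- Covering dimension: `covDim X ≤ n` iff every open cover admits a shrinking
(an open refinement indexed by the same set) of order ≤ n+1. -/
noncomputable def covDim (X : Type*) [TopologicalSpace X] : ℕ∞ :=
  sInf {n : ℕ∞ | ∀ (ι : Type) (U : ι → Set X), (∀ i, IsOpen (U i)) →
    (⋃ i, U i) = univ →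
    ∃ V : ι → Set X, (∀ i, IsOpen (V i)) ∧ (⋃ i, V i) = univ ∧
      (∀ i, V i ⊆ U i) ∧ ∀ x : X, {i | x ∈ V i}.encard ≤ n + 1}

/-!
A map is 0-dimensional iff, for every `ε > 0`, each of its fibres is covered by pairwise disjoint
open sets of diameter at most `ε`. For fixed `ε` these maps form an open set: by compactness such a
cover of `f⁻¹(y)` contains `f⁻¹(B(y, δ))`, hence the fibres of every map uniformly close to `f`
near `y`. So the 0-dimensional maps form the `G_δ` set `⋂ₙ` of these open sets for `ε = 1/(n+1)`,
and by Baire it suffices that each of them is dense. To approximate `f`, take a partition of unity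
`φ` subordinate to a cover of `A` by small sets of order `≤ m + 1` and put `g = ∑ φᵢ • pᵢ` with
points `pᵢ` near `f(xᵢ)` in general position. On a fibre `g⁻¹(y)` the weights `(φᵢ(a))ᵢ` are
barycentric coordinates of `y` with respect to at most `m + 1` affinely independent points, so they
take finitely many values, and their level sets cut the fibre into finitely many small compact
pieces.
-/

open Metric Function Module

open scoped Topology Finset

section CoveringDimension

variable {X : Type*} [TopologicalSpace X]

lemma covDim_le_iff {n : ℕ∞} (hn : n ≠ ⊤) :
    covDim X ≤ n ↔ ∀ (ι : Type) (U : ι → Set X), (∀ i, IsOpen (U i)) → (⋃ i, U i) = univ →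
      ∃ V : ι → Set X, (∀ i, IsOpen (V i)) ∧ (⋃ i, V i) = univ ∧ (∀ i, V i ⊆ U i) ∧
        ∀ x : X, {i | x ∈ V i}.encard ≤ n + 1 := by
  refine ⟨fun h ι U hU hcov => ?_, fun h => sInf_le h⟩
  rw [covDim] at h
  rcases eq_empty_or_nonempty {k : ℕ∞ | _} with he | hne
  · rw [he, sInf_empty, top_le_iff] at h
    exact absurd h hn
  obtain ⟨V, hVo, hVc, hVU, hV⟩ := csInf_mem hne ι U hU hcov
  exact ⟨V, hVo, hVc, hVU, fun x => (hV x).trans (by gcongr)⟩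

lemma pairwise_disjoint_iff_forall_encard_le_one {ι α : Type*} (V : ι → Set α) :
    Pairwise (Disjoint on V) ↔ ∀ x, {i | x ∈ V i}.encard ≤ 1 := by
  simp only [encard_le_one_iff, mem_ofPred_eq, Pairwise, onFun, disjoint_left]
  exact ⟨fun h x i j hi hj => by_contra fun hij => h hij hi hj,
    fun h i j hij x hi hj => hij (h x i j hi hj)⟩

lemma covDim_le_zero_iff :
    covDim X ≤ 0 ↔ ∀ (ι : Type) (U : ι → Set X), (∀ i, IsOpen (U i)) → (⋃ i, U i) = univ →
      ∃ V : ι → Set X, (∀ i, IsOpen (V i)) ∧ (⋃ i, V i) = univ ∧ (∀ i, V i ⊆ U i) ∧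
        Pairwise (Disjoint on V) := by
  simp only [covDim_le_iff ENat.zero_ne_top, zero_add, pairwise_disjoint_iff_forall_encard_le_one]

end CoveringDimension

lemma exists_open_superset_pairwise_disjoint {α ι : Type*} [PseudoEMetricSpace α] [Finite ι]
    {K : ι → Set α} (hK : ∀ i, IsClosed (K i)) (hd : Pairwise (Disjoint on K)) :
    ∃ W : ι → Set α, (∀ i, IsOpen (W i)) ∧ (∀ i, K i ⊆ W i) ∧ Pairwise (Disjoint on W) := by
  refine ⟨fun i => {x | ∀ j ≠ i, infEDist x (K i) < infEDist x (K j)}, fun i => ?_,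
    fun i x hx j hji => ?_, fun i j hij => disjoint_left.2 fun x hi hj => ?_⟩
  · simp only [ofPred_forall]
    exact isOpen_iInter_of_finite fun j => isOpen_iInter_of_finite fun _ =>
      isOpen_lt continuous_infEDist continuous_infEDist
  · rw [infEDist_zero_of_mem hx, infEDist_pos_iff_notMem_closure, (hK j).closure_eq]
    exact disjoint_left.1 (hd hji.symm) hx
  · exact (hi j hij.symm).asymm (hj i hij)

section DisjointOpenCovers

variable {α : Type*} [MetricSpace α]

def CoveredByDisjointOpens (ε : ℝ) (K : Set α) : Prop :=
  ∃ 𝒰 : Set (Set α), (∀ U ∈ 𝒰, IsOpen U ∧ diam U ≤ ε) ∧ 𝒰.PairwiseDisjoint id ∧ K ⊆ ⋃₀ 𝒰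

lemma CoveredByDisjointOpens.mono {ε ε' : ℝ} {K K' : Set α} (h : CoveredByDisjointOpens ε K)
    (hε : ε ≤ ε') (hK : K' ⊆ K) : CoveredByDisjointOpens ε' K' :=
  let ⟨𝒰, h𝒰, hd, hcov⟩ := h
  ⟨𝒰, fun U hU => ⟨(h𝒰 U hU).1, (h𝒰 U hU).2.trans hε⟩, hd, hK.trans hcov⟩

lemma coveredByDisjointOpens_of_isCompact {ι : Type*} [Finite ι] {ε : ℝ} {K : ι → Set α}
    (hK : ∀ i, IsCompact (K i)) (hd : Pairwise (Disjoint on K)) (hdiam : ∀ i, diam (K i) < ε)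
    {F : Set α} (hF : F ⊆ ⋃ i, K i) : CoveredByDisjointOpens ε F := by
  obtain ⟨W, hWo, hKW, hWd⟩ := exists_open_superset_pairwise_disjoint (fun i => (hK i).isClosed) hd
  have hδ (i : ι) : 0 < (ε - diam (K i)) / 2 := half_pos (sub_pos.2 (hdiam i))
  set U := fun i => W i ∩ thickening ((ε - diam (K i)) / 2) (K i)
  refine ⟨range U, forall_mem_range.2 fun i => ⟨(hWo i).inter isOpen_thickening, ?_⟩,
    Pairwise.range_pairwise fun i j hij => (hWd hij).mono inter_subset_left inter_subset_left,
    hF.trans <| iUnion_subset fun i x hx =>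
      mem_sUnion_of_mem (show x ∈ U i from ⟨hKW i hx, self_subset_thickening (hδ i) _ hx⟩)
        (mem_range_self i)⟩
  calc diam (U i) ≤ diam (thickening ((ε - diam (K i)) / 2) (K i)) :=
        diam_mono inter_subset_right (hK i).isBounded.thickening
    _ ≤ diam (K i) + 2 * ((ε - diam (K i)) / 2) := diam_thickening_le _ (hδ i).le
    _ = ε := by ring

end DisjointOpenCovers

lemma isClosed_of_pairwise_disjoint_open_cover {X ι : Type*} [TopologicalSpace X]
    {V : ι → Set X} (hV : ∀ i, IsOpen (V i)) (hc : ⋃ i, V i = univ)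
    (hd : Pairwise (Disjoint on V)) (i : ι) : IsClosed (V i) := by
  refine isOpen_compl_iff.1 (isOpen_iff_forall_mem_open.2 fun x hx => ?_)
  obtain ⟨j, hj⟩ := mem_iUnion.1 (hc ▸ mem_univ x)
  exact ⟨V j, (hd fun hji : j = i => hx (hji ▸ hj)).subset_compl_right, hV j, hj⟩

lemma covDim_le_zero_iff_coveredByDisjointOpens {α : Type} [MetricSpace α] [CompactSpace α]
    {K : Set α} (hK : IsClosed K) : covDim K ≤ 0 ↔ ∀ ε > 0, CoveredByDisjointOpens ε K := by
  have : CompactSpace K := isCompact_iff_compactSpace.1 hK.isCompact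
  constructor
  · intro h ε hε
    obtain ⟨t, -, htf, hKt⟩ := finite_cover_balls_of_compact hK.isCompact (by positivity : 0 < ε / 4)
    have := htf.to_subtype
    obtain ⟨V, hVo, hVc, hVU, hVd⟩ := covDim_le_zero_iff.1 h t
      (fun b => (↑) ⁻¹' ball (b : α) (ε / 4)) (fun b => isOpen_ball.preimage continuous_subtype_val)
      (eq_univ_of_forall fun x => by simpa using hKt x.2)
    refine coveredByDisjointOpens_of_isCompact (K := fun b => (↑) '' V b)
      (fun b => ((isClosed_of_pairwise_disjoint_open_cover hVo hVc hVd b).isCompact.image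
        continuous_subtype_val))
      (fun b b' hbb' => disjoint_image_of_injective Subtype.val_injective (hVd hbb'))
      (fun b => ?_) (fun x hx => ?_)
    · calc diam ((↑) '' V b) ≤ diam (ball (b : α) (ε / 4)) :=
            diam_mono (image_subset_iff.2 (hVU b)) isBounded_ball
        _ ≤ 2 * (ε / 4) := diam_ball (by positivity)
        _ < ε := by linarith
    · obtain ⟨b, hb⟩ := mem_iUnion.1 (hVc ▸ mem_univ (⟨x, hx⟩ : K))
      exact mem_iUnion.2 ⟨b, _, hb, rfl⟩
  · intro h
    rw [covDim_le_zero_iff]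
    intro ι U hUo hUc
    rcases isEmpty_or_nonempty ι with hι | ⟨⟨i₀⟩⟩
    · exact ⟨U, hUo, hUc, fun _ => subset_rfl, fun i => isEmptyElim i⟩
    choose O hOo hOU using fun i => isOpen_induced_iff.1 (hUo i)
    have hKO : K ⊆ ⋃ i, O i := fun x hx => by
      obtain ⟨i, hi⟩ := mem_iUnion.1 (hUc ▸ mem_univ (⟨x, hx⟩ : K))
      exact mem_iUnion.2 ⟨i, by rwa [← hOU] at hi⟩
    obtain ⟨r, hr, hrO⟩ := lebesgue_number_lemma_of_metric hK.isCompact hOo hKO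
    obtain ⟨𝒰, h𝒰, hd, hcov⟩ := h (r / 2) (half_pos hr)
    have hσ (W : Set α) : ∃ i, W ∈ 𝒰 → (W ∩ K).Nonempty → W ⊆ O i := by
      by_cases hW : W ∈ 𝒰 ∧ (W ∩ K).Nonempty
      · obtain ⟨x, hxW, hxK⟩ := hW.2
        obtain ⟨i, hi⟩ := hrO x hxK
        refine ⟨i, fun _ _ w hw => hi ?_⟩
        calc dist w x ≤ diam W := dist_le_diam_of_mem isBounded_of_compactSpace hw hxW
          _ ≤ r / 2 := (h𝒰 W hW.1).2
          _ < r := half_lt_self hr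
      · exact ⟨i₀, fun h1 h2 => absurd ⟨h1, h2⟩ hW⟩
    choose σ hσ using hσ
    refine ⟨fun i => (↑) ⁻¹' ⋃₀ {W ∈ 𝒰 | σ W = i}, fun i => ?_, ?_, fun i => ?_,
      fun i j hij => ?_⟩
    · exact (isOpen_sUnion fun W hW => (h𝒰 W hW.1).1).preimage continuous_subtype_val
    · refine eq_univ_of_forall fun x => ?_
      obtain ⟨W, hW, hxW⟩ := hcov x.2
      exact mem_iUnion.2 ⟨σ W, W, ⟨hW, rfl⟩, hxW⟩
    · rintro x ⟨W, ⟨hW, rfl⟩, hxW⟩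
      rw [← hOU]
      exact hσ W hW ⟨x, hxW, x.2⟩ hxW
    · refine disjoint_left.2 ?_
      rintro x ⟨W, ⟨hW, rfl⟩, hxW⟩ ⟨W', ⟨hW', rfl⟩, hxW'⟩
      exact hij (congrArg σ (hd.elim_set hW hW' x hxW hxW'))

lemma exists_preimage_ball_subset_of_preimage_singleton_subset {A Y : Type*} [TopologicalSpace A]
    [CompactSpace A] [MetricSpace Y] {f : A → Y} (hf : Continuous f) {y : Y} {O : Set A}
    (hO : IsOpen O) (hyO : f ⁻¹' {y} ⊆ O) : ∃ δ > 0, f ⁻¹' ball y δ ⊆ O := by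
  have : O ∈ Filter.comap f (𝓝 y) := by
    rw [hf.isClosedMap.comap_nhds_eq hf]
    exact hO.mem_nhdsSet.2 hyO
  obtain ⟨t, ht, htO⟩ := this
  obtain ⟨δ, hδ, hδt⟩ := Metric.mem_nhds_iff.1 ht
  exact ⟨δ, hδ, (preimage_mono hδt).trans htO⟩

section FineMaps

variable {A Y : Type*} [MetricSpace A] [CompactSpace A] [MetricSpace Y]

def fineMaps (ε : ℝ) : Set C(A, Y) := {f | ∀ y, CoveredByDisjointOpens ε (f ⁻¹' {y})}

lemma isOpen_fineMaps (ε : ℝ) : IsOpen (fineMaps ε : Set C(A, Y)) := by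
  refine Metric.isOpen_iff.2 fun f hf => ?_
  choose 𝒰 h𝒰 hd hcov using hf
  choose δ hδ hδ𝒰 using fun y => exists_preimage_ball_subset_of_preimage_singleton_subset
    f.continuous (isOpen_sUnion fun U hU => (h𝒰 y U hU).1) (hcov y)
  obtain ⟨r, hr, hrδ⟩ := lebesgue_number_lemma_of_metric (isCompact_range f.continuous)
    (fun y => isOpen_ball (x := y) (ε := δ y))
    (fun z _ => mem_iUnion.2 ⟨z, mem_ball_self (hδ z)⟩)
  refine ⟨r / 2, half_pos hr, fun g hg y' => ?_⟩
  rcases (g ⁻¹' {y'}).eq_empty_or_nonempty with he | ⟨a₀, ha₀⟩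
  · exact ⟨∅, by simp, pairwiseDisjoint_empty, by simp [he]⟩
  obtain ⟨y, hy⟩ := hrδ (f a₀) (mem_range_self a₀)
  refine ⟨𝒰 y, h𝒰 y, hd y, fun x hx => hδ𝒰 y (hy ?_)⟩
  have hgf (a : A) : dist (g a) (f a) < r / 2 := (g.dist_apply_le_dist a).trans_lt hg
  have hgx : g x = g a₀ := hx.trans ha₀.symm
  calc dist (f x) (f a₀) ≤ dist (f x) (g x) + dist (g a₀) (f a₀) := by
        rw [← hgx]; exact dist_triangle _ _ _
    _ < r / 2 + r / 2 := add_lt_add (dist_comm (g x) (f x) ▸ hgf x) (hgf a₀)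
    _ = r := add_halves r

end FineMaps

lemma setOf_forall_covDim_fiber_le_zero_eq_iInter_fineMaps {A : Type} {Y : Type*}
    [MetricSpace A] [CompactSpace A] [MetricSpace Y] :
    {f : C(A, Y) | ∀ y, covDim (f ⁻¹' {y}) ≤ 0} = ⋂ n : ℕ, fineMaps (1 / ((n : ℝ) + 1)) := by
  ext f
  have hfib (y : Y) := covDim_le_zero_iff_coveredByDisjointOpens
    (isClosed_singleton.preimage f.continuous (t := {y}))
  simp only [mem_ofPred_eq, mem_iInter, fineMaps, hfib]
  refine ⟨fun h n y => h y _ Nat.one_div_pos_of_nat, fun h y ε hε => ?_⟩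
  obtain ⟨n, hn⟩ := exists_nat_one_div_lt hε
  exact (h n y).mono hn.le subset_rfl

section GeneralPosition

def InGeneralPosition (k : Type*) {ι V P : Type*} [Ring k] [AddCommGroup V] [Module k V]
    [AddTorsor V P] (n : ℕ) (p : ι → P) : Prop :=
  ∀ S : Finset ι, #S ≤ n + 1 → AffineIndependent k fun i : S => p i

lemma affineIndependent_of_notMem_affineSpan_erase {k ι V P : Type*} [DivisionRing k]
    [AddCommGroup V] [Module k V] [AddTorsor V P] [DecidableEq ι] {p : ι → P} {S : Finset ι}
    {a : ι} (ha : a ∈ S) (hind : AffineIndependent k fun i : S.erase a => p i)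
    (hnot : p a ∉ affineSpan k (p '' ↑(S.erase a))) : AffineIndependent k fun i : S => p i := by
  refine AffineIndependent.affineIndependent_of_notMem_span (i := ⟨a, ha⟩) ?_ ?_
  · let e : {x : S // x ≠ ⟨a, ha⟩} ↪ S.erase a :=
      ⟨fun x => ⟨x.1, Finset.mem_erase.2 ⟨fun h => x.2 (Subtype.ext h), x.1.2⟩⟩,
        fun x y h => Subtype.ext (Subtype.ext (congrArg (fun j : S.erase a => (j : ι)) h))⟩
    exact hind.comp_embedding e
  · convert hnot using 3
    ext v
    simp [Subtype.ext_iff, and_comm]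

variable {V : Type*} [NormedAddCommGroup V] [NormedSpace ℝ V]

lemma AffineSubspace.dense_compl_of_ne_top {S : AffineSubspace ℝ V} (hS : S ≠ ⊤) :
    Dense (S : Set V)ᶜ := by
  rw [← interior_eq_empty_iff_dense_compl]
  by_contra h
  have := affineSpan_eq_top_of_nonempty_interior (s := (S : Set V))
    (by rwa [S.convex.convexHull_eq, nonempty_iff_ne_empty])
  exact hS (by rwa [AffineSubspace.affineSpan_coe] at this)

lemma affineSpan_image_ne_top_of_card_le {ι : Type*} (p : ι → V) {T : Finset ι}
    (hT : #T ≤ finrank ℝ V) : affineSpan ℝ (p '' T) ≠ ⊤ := by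
  classical
  rcases T.eq_empty_or_nonempty with rfl | hTne
  · simp
  obtain ⟨n, hn⟩ := Nat.exists_eq_add_of_le' (Finset.card_pos.2 hTne)
  intro htop
  have hdir : vectorSpan ℝ (p '' T) = ⊤ := by
    rw [← direction_affineSpan, htop, AffineSubspace.direction_top]
  have := finrank_vectorSpan_image_finset_le ℝ p T hn
  rw [Finset.coe_image, hdir, finrank_top] at this
  omega

variable [FiniteDimensional ℝ V]

lemma exists_mem_ball_forall_notMem_affineSpan {ι : Type*} [Finite ι] (p : ι → V) (q : V)
    {r : ℝ} (hr : 0 < r) :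
    ∃ z ∈ ball q r, ∀ T : Finset ι, #T ≤ finrank ℝ V → z ∉ affineSpan ℝ (p '' T) := by
  have hdense : Dense (⋂ T : {T : Finset ι // #T ≤ finrank ℝ V},
      (affineSpan ℝ (p '' T.1) : Set V)ᶜ) :=
    dense_iInter_of_isOpen (fun T => (AffineSubspace.closed_of_finiteDimensional _).isOpen_compl)
      fun T => AffineSubspace.dense_compl_of_ne_top (affineSpan_image_ne_top_of_card_le p T.2)
  obtain ⟨z, hz, hzq⟩ := hdense.exists_mem_open isOpen_ball ⟨q, mem_ball_self hr⟩
  exact ⟨z, hzq, fun T hT => mem_iInter.1 hz ⟨T, hT⟩⟩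

lemma exists_inGeneralPosition_near {ι : Type*} [Fintype ι] (q : ι → V) {r : ℝ} (hr : 0 < r) :
    ∃ p : ι → V, (∀ i, dist (p i) (q i) < r) ∧ InGeneralPosition ℝ (finrank ℝ V) p := by
  classical
  suffices ∀ s : Finset ι, ∃ p : ι → V, (∀ i, dist (p i) (q i) < r) ∧
      ∀ S ⊆ s, #S ≤ finrank ℝ V + 1 → AffineIndependent ℝ fun i : S => p i by
    obtain ⟨p, hpq, hp⟩ := this Finset.univ
    exact ⟨p, hpq, fun S => hp S S.subset_univ⟩
  intro s
  induction s using Finset.induction_on with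
  | empty => exact ⟨q, fun i => by simpa using hr, fun S hS _ => by
      rw [Finset.subset_empty.1 hS]; exact affineIndependent_of_subsingleton ℝ _⟩
  | insert a s has ih =>
    obtain ⟨p, hpq, hp⟩ := ih
    obtain ⟨z, hzq, hz⟩ := exists_mem_ball_forall_notMem_affineSpan p (q a) hr
    have hupd {T : Finset ι} (haT : a ∉ T) :
        (fun i : T => Function.update p a z i) = fun i : T => p i :=
      funext fun i => Function.update_of_ne (ne_of_mem_of_not_mem i.2 haT) _ _
    refine ⟨Function.update p a z, fun i => ?_, fun S hS hcard => ?_⟩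
    · rcases eq_or_ne i a with rfl | hia
      · simpa using hzq
      · simpa [hia] using hpq i
    by_cases haS : a ∈ S
    · refine affineIndependent_of_notMem_affineSpan_erase haS ?_ ?_
      · rw [hupd (S.notMem_erase a)]
        exact hp _ (Finset.subset_insert_iff.1 hS) ((S.card_erase_le).trans hcard)
      · have himg : Function.update p a z '' ↑(S.erase a) = p '' ↑(S.erase a) :=
          image_congr fun i hi => Function.update_of_ne (Finset.ne_of_mem_erase hi) _ _
        rw [himg, Function.update_self]
        refine hz _ ?_
        rw [Finset.card_erase_of_mem haS]
        omega
    · rw [hupd haS]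
      exact hp S ((Finset.subset_insert_iff_of_notMem haS).1 hS) hcard

end GeneralPosition

lemma InGeneralPosition.eq_of_sum_smul_eq {k ι V : Type*} [Ring k] [AddCommGroup V]
    [Module k V] [Fintype ι] {n : ℕ} {p : ι → V} (hp : InGeneralPosition k n p) {S : Finset ι}
    (hS : #S ≤ n + 1) {w w' : ι → k} (hw : ∀ i ∉ S, w i = 0) (hw' : ∀ i ∉ S, w' i = 0)
    (hsum : ∑ i, w i = ∑ i, w' i) (hcomb : ∑ i, w i • p i = ∑ i, w' i • p i) : w = w' := by
  have hsub {v : ι → k} (hv : ∀ i ∉ S, v i = 0) (i : ι) : v i ≠ 0 → i ∈ S :=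
    not_imp_comm.1 (hv i)
  have hsub' {v : ι → k} (hv : ∀ i ∉ S, v i = 0) (i : ι) : v i • p i ≠ 0 → i ∈ S :=
    fun h => hsub hv i (left_ne_zero_of_smul h)
  have heq := (hp S hS).eq_of_sum_eq_sum (s := Finset.univ) (w₁ := fun i : S => w i)
    (w₂ := fun i : S => w' i)
    (by rwa [S.sum_coe_sort w, S.sum_coe_sort w', Fintype.sum_subset (hsub hw),
      Fintype.sum_subset (hsub hw')])
    (by rwa [S.sum_coe_sort (fun i => w i • p i), S.sum_coe_sort (fun i => w' i • p i),
      Fintype.sum_subset (hsub' hw), Fintype.sum_subset (hsub' hw')])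
  funext i
  by_cases hi : i ∈ S
  · exact heq ⟨i, hi⟩ (Finset.mem_univ _)
  · rw [hw i hi, hw' i hi]

section Density

variable {A : Type} [MetricSpace A] [CompactSpace A]

lemma exists_partitionOfUnity_of_covDim_le {n : ℕ} (hA : covDim A ≤ n) {ρ : ℝ} (hρ : 0 < ρ) :
    ∃ (t : Finset A) (φ : PartitionOfUnity t A univ), (∀ i a, φ i a ≠ 0 → dist a i < ρ) ∧
      ∀ a, #{i | φ i a ≠ 0} ≤ n + 1 := by
  classical
  obtain ⟨t, ht⟩ := isCompact_univ.elim_finite_subcover (fun a : A => ball a ρ)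
    (fun _ => isOpen_ball) (fun a _ => mem_iUnion.2 ⟨a, mem_ball_self hρ⟩)
  obtain ⟨V, hVo, hVc, hVU, hV⟩ := (covDim_le_iff (ENat.natCast_ne_top n)).1 hA t
    (fun i => ball (i : A) ρ) (fun _ => isOpen_ball)
    (eq_univ_of_forall fun a => by simpa using ht (mem_univ a))
  obtain ⟨φ, hφV⟩ := PartitionOfUnity.exists_isSubordinate isClosed_univ V hVo hVc.symm.subset
  have hφ (i : t) (a : A) (h : φ i a ≠ 0) : a ∈ V i := hφV i (subset_tsupport _ h)
  refine ⟨t, φ, fun i a h => hVU i (hφ i a h), fun a => ?_⟩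
  have : ({i | φ i a ≠ 0} : Set t).encard ≤ n + 1 :=
    (encard_le_encard fun i h => hφ i a h).trans (hV a)
  rw [← Finset.coe_filter_univ, encard_coe_eq_coe_finsetCard] at this
  exact_mod_cast this

variable {V : Type*} [NormedAddCommGroup V] [NormedSpace ℝ V]

lemma coveredByDisjointOpens_fiber_of_inGeneralPosition {ι : Type*} [Fintype ι] {n : ℕ}
    (φ : PartitionOfUnity ι A univ) {x : ι → A} {ρ ε : ℝ}
    (hφ : ∀ i a, φ i a ≠ 0 → dist a (x i) < ρ) (horder : ∀ a, #{i | φ i a ≠ 0} ≤ n + 1)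
    (hρε : 2 * ρ < ε) {p : ι → V} (hp : InGeneralPosition ℝ n p) (g : C(A, V))
    (hg : ∀ a, g a = ∑ i, φ i a • p i) (y : V) : CoveredByDisjointOpens ε (g ⁻¹' {y}) := by
  classical
  set F := g ⁻¹' {y}
  let Φ : A → ι → ℝ := fun a i => φ i a
  have hΦ : Continuous Φ := continuous_pi fun i => (φ i).continuous
  have hsum (a : A) : ∑ i, Φ a i = 1 := by
    rw [← finsum_eq_sum_of_fintype]; exact φ.sum_eq_one (mem_univ a)
  -- on a fibre, the barycentric coordinates of `y` are determined by their support
  have hinj : InjOn support (Φ '' F) := by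
    rintro _ ⟨a, ha, rfl⟩ _ ⟨c, hc, rfl⟩ hsupp
    refine hp.eq_of_sum_smul_eq (horder a) (fun i hi => by simpa using hi) (fun i hi => ?_)
      ((hsum a).trans (hsum c).symm) (by rw [← hg, ← hg, ha, hc])
    simpa using (Set.ext_iff.1 hsupp i).not.1 (by simpa using hi)
  have := ((toFinite _).of_finite_image hinj).to_subtype
  refine coveredByDisjointOpens_of_isCompact (K := fun v : Φ '' F => F ∩ Φ ⁻¹' {v.1})
    (fun v => ((isClosed_singleton.preimage g.continuous).inter
      (isClosed_singleton.preimage hΦ)).isCompact)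
    (fun v v' hvv' => disjoint_left.2 fun a ha ha' => hvv' (Subtype.ext (ha.2.symm.trans ha'.2)))
    (fun v => ?_) (fun a ha => mem_iUnion.2 ⟨⟨Φ a, a, ha, rfl⟩, ha, rfl⟩)
  obtain ⟨_, a, -, rfl⟩ := v
  obtain ⟨i, hi⟩ := φ.exists_pos (mem_univ a)
  have hball : F ∩ Φ ⁻¹' {Φ a} ⊆ ball (x i) ρ := fun b hb =>
    hφ i b (by rw [show φ i b = φ i a from congrFun hb.2 i]; exact hi.ne')
  calc diam (F ∩ Φ ⁻¹' {Φ a}) ≤ diam (ball (x i) ρ) := diam_mono hball isBounded_ball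
    _ ≤ 2 * ρ := diam_ball ((dist_nonneg).trans (hφ i a hi.ne').le)
    _ < ε := hρε

variable [FiniteDimensional ℝ V]

lemma dense_fineMaps (hA : covDim A ≤ finrank ℝ V) {ε : ℝ} (hε : 0 < ε) :
    Dense (fineMaps ε : Set C(A, V)) := by
  refine Metric.dense_iff.2 fun f η hη => ?_
  obtain ⟨ρ, hρ, hf⟩ := Metric.uniformContinuous_iff.1
    (CompactSpace.uniformContinuous_of_continuous f.continuous) (η / 4) (by positivity)
  obtain ⟨t, φ, hφ, horder⟩ :=
    exists_partitionOfUnity_of_covDim_le hA (lt_min hρ (by positivity : 0 < ε / 4))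
  obtain ⟨p, hpf, hp⟩ := exists_inGeneralPosition_near (fun i : t => f i) (by positivity : 0 < η / 4)
  let g : C(A, V) := ⟨fun a => ∑ i, φ i a • p i, by fun_prop⟩
  have hgf (a : A) : dist (g a) (f a) ≤ η / 2 := by
    show g a ∈ closedBall (f a) (η / 2)
    rw [show g a = ∑ᶠ i, φ i a • p i from (finsum_eq_sum_of_fintype _).symm]
    refine φ.finsum_smul_mem_convex (g := fun i _ => p i) (mem_univ a) (fun i hi => ?_)
      (convex_closedBall _ _)
    have hfa : dist (f a) (f i) < η / 4 := hf ((hφ i a hi).trans_le (min_le_left _ _))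
    calc dist (p i) (f a) ≤ dist (p i) (f i) + dist (f a) (f i) := dist_triangle_right _ _ _
      _ ≤ η / 2 := by linarith [hpf i]
  refine ⟨g, ?_, coveredByDisjointOpens_fiber_of_inGeneralPosition φ hφ horder ?_ hp g
    (fun _ => rfl)⟩
  · exact mem_ball.2 (((ContinuousMap.dist_le (by positivity)).2 hgf).trans_lt (by linarith))
  · linarith [min_le_right ρ (ε / 4)]

end Density

theorem zero_dimensional_maps_dense_Gdelta (A : Type) [MetricSpace A] [CompactSpace A]
    (m : ℕ) (hA : covDim A ≤ (m : ℕ∞)) :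
    Dense {f : C(A, EuclideanSpace ℝ (Fin m)) | ∀ x, covDim (f ⁻¹' {x}) ≤ 0} ∧
    IsGδ {f : C(A, EuclideanSpace ℝ (Fin m)) | ∀ x, covDim (f ⁻¹' {x}) ≤ 0} := by
  rw [← finrank_euclideanSpace_fin (𝕜 := ℝ) (n := m)] at hA
  rw [setOf_forall_covDim_fiber_le_zero_eq_iInter_fineMaps]
  exact ⟨dense_iInter_of_isOpen (fun n => isOpen_fineMaps _)
      fun n => dense_fineMaps hA Nat.one_div_pos_of_nat,
    .iInter fun n => (isOpen_fineMaps _).isGδ⟩
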